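/- Let T = wT_φ on C(K) with φ a non-surjective homeomorphism of K into itself, L = ⋂_{n≥0} φⁿ(K), N = L \ Int_K(L), M = K \ Int_K(L). If |λ| > ρ(T, C(N)) and λ ∉ σ₂(T, C(L)), then λ ∉ σ₂(T), where σ₂ denotes the upper semi-Fredholm spectrum. -/

import Mathlib

/-!
Write `S = λ - T` and pick `ρ(T, C(N)) < t < |λ|`. By Gelfand's formula `‖(T|_N)^m‖ < t^m` for
some `m`, so the `m`-step weight `∏_{i<m} w ∘ φ^i` is `< t^m` on `N`, hence on an open
neighbourhood `V` of `N`. Since `φ` is injective, orbits starting off `Int L` stay off `Int L`, and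
by compactness every orbit lies in `V ∪ Int L` after a uniform time; so off `Int L` the `n`-step
weights are `O(tⁿ)`. Iterating `λ f = S f + w · f ∘ φ` then gives `|f| ≤ C ‖S f‖` off `Int L`,
i.e. `‖f‖ ≤ C ‖S f‖ + ‖f|_L‖`. Restriction to `L` intertwines `S` with `λ - T|_L`, which is bounded
below modulo the finite-rank projection onto its kernel; so `S` is bounded below modulo a
finite-rank operator, which forces a closed range and a finite-dimensional kernel.
-/

open Filter Topology NNReal

namespace ContinuousLinearMap

variable {𝕜 : Type*} [RCLike 𝕜]
variable {E F G : Type*} [NormedAddCommGroup E] [NormedSpace 𝕜 E]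
  [NormedAddCommGroup F] [NormedSpace 𝕜 F] [NormedAddCommGroup G] [NormedSpace 𝕜 G]

def IsUpperSemiFredholm (S : E →L[𝕜] F) : Prop :=
  IsClosed (Set.range S) ∧ FiniteDimensional 𝕜 (LinearMap.ker (S : E →ₗ[𝕜] F))

theorem IsUpperSemiFredholm.of_norm_le_mul_add [CompleteSpace E] [FiniteDimensional 𝕜 G]
    {S : E →L[𝕜] F} (Q : E →L[𝕜] G) (C : ℝ≥0) (h : ∀ x, ‖x‖ ≤ C * ‖S x‖ + ‖Q x‖) :
    IsUpperSemiFredholm S := by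
  refine ⟨?_, ?_⟩
  · have : (LinearMap.ker (Q : E →ₗ[𝕜] G)).CoFG := Submodule.CoFG.ker _
    apply LinearMap.isClosed_range_of_isClosed_map_of_finiteDimensional_quotient
      (s := LinearMap.ker (Q : E →ₗ[𝕜] G))
    have : CompleteSpace (LinearMap.ker (Q : E →ₗ[𝕜] G)) := (Q.isClosed_ker).completeSpace_coe
    have hanti : AntilipschitzWith C (S ∘L (LinearMap.ker (Q : E →ₗ[𝕜] G)).subtypeL) :=
      antilipschitz_of_bound _ fun x => by simpa [LinearMap.mem_ker.1 x.2] using h x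
    convert hanti.isClosed_range (S ∘L _).uniformContinuous using 1
    ext y; simp
  · refine FiniteDimensional.of_injective
      ((Q : E →ₗ[𝕜] G) ∘ₗ (LinearMap.ker (S : E →ₗ[𝕜] F)).subtype) fun x y hxy => ?_
    have hQ : Q ((x : E) - y) = 0 := by simpa [sub_eq_zero] using hxy
    have hS : S ((x : E) - y) = 0 := by simp
    rw [← sub_eq_zero, ← norm_le_zero_iff]
    simpa [hQ, hS] using h ((x : E) - y)

theorem IsUpperSemiFredholm.exists_norm_le_mul_add [CompleteSpace E] [CompleteSpace F]
    {S : E →L[𝕜] F} (hS : IsUpperSemiFredholm S) :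
    ∃ (P : E →L[𝕜] LinearMap.ker (S : E →ₗ[𝕜] F)) (C : ℝ≥0),
      ∀ x, ‖x‖ ≤ C * ‖S x‖ + ‖P x‖ := by
  obtain ⟨hrange, hker⟩ := hS
  obtain ⟨P, hP⟩ :=
    Submodule.ClosedComplemented.of_finiteDimensional (LinearMap.ker (S : E →ₗ[𝕜] F))
  -- On the closed complement `ker P` of `ker S`, `S` is injective with the same closed range,
  -- hence bounded below.
  set W := LinearMap.ker (P : E →ₗ[𝕜] LinearMap.ker (S : E →ₗ[𝕜] F))
  have : CompleteSpace W := P.isClosed_ker.completeSpace_coe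
  have hsub : ∀ x, x - (P x : E) ∈ W := fun x => by
    simp [W, LinearMap.mem_ker, hP]
  have hinj : Function.Injective (S ∘L W.subtypeL) := (injective_iff_map_eq_zero _).2 fun x hx => by
    have hPx : (P x : E) = x := congrArg Subtype.val (hP ⟨x, hx⟩)
    have hPx0 : P x = 0 := x.2
    ext
    simpa [hPx0] using hPx.symm
  have hrange' : Set.range (S ∘L W.subtypeL) = Set.range S := by
    refine subset_antisymm (Set.range_subset_iff.2 fun x => ⟨x, rfl⟩) ?_
    rintro _ ⟨x, rfl⟩
    refine ⟨⟨_, hsub x⟩, ?_⟩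
    simp
  obtain ⟨C, hC⟩ := (S ∘L W.subtypeL).antilipschitz_of_injective_of_isClosed_range hinj
    (hrange' ▸ hrange)
  refine ⟨P, C, fun x => ?_⟩
  calc ‖x‖ ≤ ‖x - (P x : E)‖ + ‖P x‖ := norm_le_norm_sub_add x _
    _ ≤ C * ‖S x‖ + ‖P x‖ := by
      gcongr
      simpa [LinearMap.mem_ker.1 (P x).2] using hC.le_mul_norm_sub ⟨_, hsub x⟩ 0

theorem IsUpperSemiFredholm.of_comp_eq {Y : Type*} [NormedAddCommGroup Y] [NormedSpace 𝕜 Y]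
    [CompleteSpace E] [CompleteSpace G] [CompleteSpace Y]
    {S : E →L[𝕜] F} {S' : G →L[𝕜] Y} (hS' : IsUpperSemiFredholm S') (R : E →L[𝕜] G)
    (R' : F →L[𝕜] Y) (hcomm : S' ∘L R = R' ∘L S) (C : ℝ≥0)
    (h : ∀ x, ‖x‖ ≤ C * ‖S x‖ + ‖R x‖) :
    IsUpperSemiFredholm S := by
  obtain ⟨P, C', hP⟩ := hS'.exists_norm_le_mul_add
  have := hS'.2
  refine .of_norm_le_mul_add (P ∘L R) (C + C' * ‖R'‖₊) fun x => ?_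
  have hRS : S' (R x) = R' (S x) := congrArg (· x) hcomm
  calc ‖x‖ ≤ C * ‖S x‖ + (C' * ‖R' (S x)‖ + ‖P (R x)‖) := by
        grw [h x, hP (R x), hRS]
    _ ≤ C * ‖S x‖ + (C' * (‖R'‖ * ‖S x‖) + ‖P (R x)‖) := by grw [R'.le_opNorm]
    _ = (C + C' * ‖R'‖₊ : ℝ≥0) * ‖S x‖ + ‖(P ∘L R) x‖ := by rw [comp_apply]; push_cast; ring

end ContinuousLinearMap

section WeightProd

variable {X M : Type*} [CommMonoid M]

def weightProd (w : X → M) (φ : X → X) (n : ℕ) (x : X) : M :=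
  ∏ i ∈ Finset.range n, w (φ^[i] x)

variable {w : X → M} {φ : X → X}

@[simp]
theorem weightProd_zero (x : X) : weightProd w φ 0 x = 1 :=
  Finset.prod_range_zero _

theorem weightProd_succ (n : ℕ) (x : X) :
    weightProd w φ (n + 1) x = weightProd w φ n x * w (φ^[n] x) :=
  Finset.prod_range_succ _ _

theorem weightProd_add (m n : ℕ) (x : X) :
    weightProd w φ (m + n) x = weightProd w φ m x * weightProd w φ n (φ^[m] x) := by
  rw [weightProd, Finset.prod_range_add]
  congr 1
  refine Finset.prod_congr rfl fun i _ => ?_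
  rw [← Function.iterate_add_apply, add_comm]

theorem weightProd_comp_of_semiconj {Y : Type*} {g : Y → X} {ψ : Y → Y}
    (h : Function.Semiconj g ψ φ) (n : ℕ) (y : Y) :
    weightProd (fun y => w (g y)) ψ n y = weightProd w φ n (g y) := by
  simp only [weightProd, (h.iterate_right _).eq]

theorem Continuous.weightProd [TopologicalSpace X] [TopologicalSpace M] [ContinuousMul M]
    (hw : Continuous w) (hφ : Continuous φ) (n : ℕ) : Continuous (weightProd w φ n) :=
  continuous_finsetProd _ fun i _ => hw.comp (hφ.iterate i)

theorem pow_mul_eq_sum_add_weightProd {R : Type*} [CommRing R] {w f g : X → R} (c : R)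
    (hg : ∀ x, g x = c * f x - w x * f (φ x)) (n : ℕ) (x : X) :
    c ^ n * f x = ∑ j ∈ Finset.range n, c ^ (n - 1 - j) * (weightProd w φ j x * g (φ^[j] x))
      + weightProd w φ n x * f (φ^[n] x) := by
  induction n with
  | zero => simp
  | succ n ih =>
    have hshift : c * ∑ j ∈ Finset.range n, c ^ (n - 1 - j) * (weightProd w φ j x * g (φ^[j] x))
        = ∑ j ∈ Finset.range n, c ^ (n - j) * (weightProd w φ j x * g (φ^[j] x)) := by
      rw [Finset.mul_sum]
      refine Finset.sum_congr rfl fun j hj => ?_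
      rw [← mul_assoc, ← pow_succ', show n - 1 - j + 1 = n - j by
        have := Finset.mem_range.1 hj; omega]
    rw [pow_succ', mul_assoc, ih, mul_add, hshift, Finset.sum_range_succ, weightProd_succ,
      Nat.add_sub_cancel, Nat.sub_self, hg, Function.iterate_succ_apply']
    ring

end WeightProd

section WeightedComposition

variable {𝕜 X : Type*} [NontriviallyNormedField 𝕜] [TopologicalSpace X]

theorem pow_apply_eq_weightProd_mul (T : C(X, 𝕜) →L[𝕜] C(X, 𝕜)) {w : X → 𝕜} {φ : X → X}
    (hT : ∀ f x, T f x = w x * f (φ x)) (n : ℕ) (f : C(X, 𝕜)) (x : X) :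
    (T ^ n) f x = weightProd w φ n x * f (φ^[n] x) := by
  induction n generalizing f with
  | zero => simp
  | succ n ih =>
    rw [pow_succ, mul_apply_eq_comp, ih, hT, weightProd_succ, mul_assoc,
      ← Function.iterate_succ_apply' φ]

theorem norm_weightProd_le_norm_pow [CompactSpace X] (T : C(X, 𝕜) →L[𝕜] C(X, 𝕜)) {w : X → 𝕜}
    {φ : X → X} (hT : ∀ f x, T f x = w x * f (φ x)) (n : ℕ) (x : X) :
    ‖weightProd w φ n x‖ ≤ ‖T ^ n‖ := by
  have hone : ‖(1 : C(X, 𝕜))‖ ≤ 1 := (ContinuousMap.norm_le _ zero_le_one).2 fun _ => by simp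
  calc ‖weightProd w φ n x‖ = ‖(T ^ n) 1 x‖ := by
        rw [pow_apply_eq_weightProd_mul T hT]; simp
    _ ≤ ‖(T ^ n) 1‖ := ContinuousMap.norm_coe_le_norm _ _
    _ ≤ ‖T ^ n‖ := (T ^ n).le_of_opNorm_le_of_le le_rfl hone |>.trans_eq (mul_one _)

end WeightedComposition

theorem exists_norm_pow_lt_of_spectralRadius_lt {A : Type*} [NormedRing A] [NormedAlgebra ℂ A]
    [CompleteSpace A] (a : A) {r : ℝ≥0} (h : spectralRadius ℂ a < r) :
    ∃ n, 0 < n ∧ ‖a ^ n‖ < (r : ℝ) ^ n := by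
  obtain ⟨n, hn, hlt⟩ := ((eventually_gt_atTop 0).and
    ((spectrum.pow_nnnorm_pow_one_div_tendsto_nhds_spectralRadius a).eventually_lt_const h)).exists
  refine ⟨n, hn, ?_⟩
  have hlt' : ‖a ^ n‖₊ ^ (n⁻¹ : ℝ) < r := by
    rwa [← ENNReal.coe_rpow_of_nonneg _ (by positivity), ENNReal.coe_lt_coe, one_div] at hlt
  have := pow_lt_pow_left₀ hlt' (by positivity) hn.ne'
  rw [NNReal.rpow_inv_natCast_pow _ hn.ne', ← NNReal.coe_lt_coe] at this
  simpa using this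

section Estimates

variable {X : Type*} {φ : X → X}

theorem norm_weightProd_le_pow {R : Type*} [NormedCommRing R] [NormOneClass R] {w : X → R}
    {A : ℝ} (hA : ∀ y, ‖w y‖ ≤ A) (n : ℕ) (x : X) : ‖weightProd w φ n x‖ ≤ A ^ n := by
  induction n with
  | zero => simp
  | succ n ih =>
    rw [weightProd_succ, pow_succ]
    exact (norm_mul_le _ _).trans (mul_le_mul ih (hA _) (norm_nonneg _) ((norm_nonneg _).trans ih))

theorem norm_weightProd_le_of_forall_le {R : Type*} [NormedCommRing R] [NormOneClass R]
    {w : X → R} {A t : ℝ} {m p : ℕ} (hA : ∀ y, ‖w y‖ ≤ A) (ht : 0 < t) (htA : t ≤ A) (hm : 0 < m)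
    {x : X} (horbit : ∀ n, p ≤ n → ‖weightProd w φ m (φ^[n] x)‖ ≤ t ^ m) (n : ℕ) :
    ‖weightProd w φ n x‖ ≤ (A / t) ^ (p + m) * t ^ n := by
  have hAt : 1 ≤ A / t := (one_le_div ht).2 htA
  induction n using Nat.strong_induction_on with
  | _ n ih =>
    rcases lt_or_ge n (p + m) with hn | hn
    · calc ‖weightProd w φ n x‖ ≤ A ^ n := norm_weightProd_le_pow hA n x
        _ = (A / t) ^ n * t ^ n := by rw [← mul_pow, div_mul_cancel₀ _ ht.ne']
        _ ≤ (A / t) ^ (p + m) * t ^ n := by gcongr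
    · obtain ⟨k, rfl⟩ := Nat.exists_eq_add_of_le' (le_of_add_le_right hn)
      rw [weightProd_add]
      calc ‖weightProd w φ k x * weightProd w φ m (φ^[k] x)‖
          ≤ ((A / t) ^ (p + m) * t ^ k) * t ^ m :=
            (norm_mul_le _ _).trans (mul_le_mul (ih k (by omega)) (horbit k (by omega))
              (norm_nonneg _) (by positivity))
        _ = (A / t) ^ (p + m) * t ^ (k + m) := by ring

theorem sum_pow_mul_pow_le_div {a t : ℝ} (ht : 0 ≤ t) (hta : t < a) (n : ℕ) :
    ∑ j ∈ Finset.range n, a ^ (n - 1 - j) * t ^ j ≤ a ^ n / (a - t) := by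
  rw [le_div_iff₀ (sub_pos.2 hta)]
  have hgeom := geom_sum₂_mul t a n
  simp only [mul_comm (t ^ _)] at hgeom
  linarith [pow_nonneg ht n]

theorem le_of_forall_pow_mul_le_add {a t u P Q : ℝ} (ht : 0 ≤ t) (hta : t < a)
    (h : ∀ n : ℕ, a ^ n * u ≤ P * a ^ n + Q * t ^ n) : u ≤ P := by
  have ha : 0 < a := ht.trans_lt hta
  have hlim : Tendsto (fun n : ℕ => P + Q * (t / a) ^ n) atTop (𝓝 (P + Q * 0)) :=
    ((tendsto_pow_atTop_nhds_zero_of_lt_one (by positivity) ((div_lt_one ha).2 hta)).const_mul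
      Q).const_add P
  refine le_of_tendsto_of_tendsto' tendsto_const_nhds (by simpa using hlim) fun n => ?_
  have han : 0 < a ^ n := pow_pos ha n
  have hpow : a ^ n * (t / a) ^ n = t ^ n := by rw [← mul_pow, mul_div_cancel₀ _ ha.ne']
  have hexp : a ^ n * (P + Q * (t / a) ^ n) = P * a ^ n + Q * t ^ n := by
    linear_combination Q * hpow
  exact le_of_mul_le_mul_left (hexp ▸ h n) han

theorem norm_le_of_norm_weightProd_le {𝕜 : Type*} [NormedField 𝕜] {w f g : X → 𝕜} {c : 𝕜}
    {t B C G : ℝ} (ht : 0 ≤ t) (htc : t < ‖c‖) (hg : ∀ y, g y = c * f y - w y * f (φ y))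
    (hfB : ∀ y, ‖f y‖ ≤ B) (hgG : ∀ y, ‖g y‖ ≤ G) {x : X}
    (hw : ∀ j, ‖weightProd w φ j x‖ ≤ C * t ^ j) :
    ‖f x‖ ≤ C * G / (‖c‖ - t) := by
  have hC : 0 ≤ C := zero_le_one.trans (by simpa using hw 0)
  have hG : 0 ≤ G := (norm_nonneg _).trans (hgG x)
  refine le_of_forall_pow_mul_le_add (Q := C * B) ht htc fun n => ?_
  calc ‖c‖ ^ n * ‖f x‖
      = ‖∑ j ∈ Finset.range n, c ^ (n - 1 - j) * (weightProd w φ j x * g (φ^[j] x))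
          + weightProd w φ n x * f (φ^[n] x)‖ := by
        rw [← pow_mul_eq_sum_add_weightProd c hg, norm_mul, norm_pow]
    _ ≤ ∑ j ∈ Finset.range n, ‖c‖ ^ (n - 1 - j) * (C * t ^ j * G) + C * t ^ n * B := by
        refine (norm_add_le _ _).trans (add_le_add ((norm_sum_le _ _).trans
          (Finset.sum_le_sum fun j _ => ?_)) ?_)
        · rw [norm_mul, norm_mul, norm_pow]
          gcongr
          exacts [hw j, hgG _]
        · rw [norm_mul]
          exact mul_le_mul (hw n) (hfB _) (norm_nonneg _) (by positivity)
    _ = C * G * ∑ j ∈ Finset.range n, ‖c‖ ^ (n - 1 - j) * t ^ j + C * B * t ^ n := by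
        rw [Finset.mul_sum]
        congr 1
        · exact Finset.sum_congr rfl fun j _ => by ring
        · ring
    _ ≤ C * G * (‖c‖ ^ n / (‖c‖ - t)) + C * B * t ^ n := by
        gcongr
        exact sum_pow_mul_pow_le_div ht htc n
    _ = C * G / (‖c‖ - t) * ‖c‖ ^ n + C * B * t ^ n := by ring

end Estimates

section Dynamics

variable {X : Type*} [TopologicalSpace X] {φ : X → X}

theorem exists_iterate_mem_of_iInter_range_subset [CompactSpace X] [T2Space X]
    (hφ : Continuous φ) {U : Set X} (hU : IsOpen U) (h : ⋂ n, Set.range φ^[n] ⊆ U) :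
    ∃ p, ∀ x, φ^[p] x ∈ U := by
  by_contra! hcon
  have hA : ∀ n, IsCompact (Set.range φ^[n] ∩ Uᶜ) := fun n =>
    (isCompact_range (hφ.iterate n)).inter_right hU.isClosed_compl
  obtain ⟨x, hx⟩ := IsCompact.nonempty_iInter_of_sequence_nonempty_isCompact_isClosed
    (fun n => Set.range φ^[n] ∩ Uᶜ)
    (fun n => Set.inter_subset_inter_left _ (by
      rw [Function.iterate_succ]; exact Set.range_comp_subset_range _ _))
    (fun n => let ⟨x, hx⟩ := hcon n; ⟨_, ⟨x, rfl⟩, hx⟩) (hA 0) fun n => (hA n).isClosed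
  rw [Set.mem_iInter] at hx
  exact (hx 0).2 (h (Set.mem_iInter.2 fun n => (hx n).1))

theorem mapsTo_compl_interior_iInter_range (hφ : Continuous φ) (hinj : Function.Injective φ) :
    Set.MapsTo φ (interior (⋂ n, Set.range φ^[n]))ᶜ (interior (⋂ n, Set.range φ^[n]))ᶜ := by
  have hpre : φ ⁻¹' (⋂ n, Set.range φ^[n]) ⊆ ⋂ n, Set.range φ^[n] := by
    intro x hx
    refine Set.mem_iInter.2 fun n => ?_
    obtain ⟨y, hy⟩ := Set.mem_iInter.1 hx (n + 1)
    rw [Function.iterate_succ_apply'] at hy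
    exact ⟨y, hinj hy⟩
  intro x hx hφx
  exact hx (interior_maximal ((Set.preimage_mono interior_subset).trans hpre)
    (isOpen_interior.preimage hφ) hφx)

end Dynamics

namespace ContinuousMap

variable {X 𝕜 : Type*} [TopologicalSpace X] [CompactSpace X] [NormedField 𝕜]

noncomputable def restrictL (s : Set X) [CompactSpace s] : C(X, 𝕜) →L[𝕜] C(s, 𝕜) :=
  LinearMap.mkContinuous
    { toFun := fun f => f.restrict s
      map_add' := fun _ _ => rfl
      map_smul' := fun _ _ => rfl } 1
    fun f => by
      simpa using (ContinuousMap.norm_le _ (norm_nonneg f)).2 fun x => f.norm_coe_le_norm x.1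

@[simp]
theorem restrictL_apply (s : Set X) [CompactSpace s] (f : C(X, 𝕜)) (x : s) :
    restrictL s f x = f x :=
  rfl

theorem norm_le_add_norm_restrictL {s u : Set X} [CompactSpace u] (hsu : s ⊆ u) (f : C(X, 𝕜))
    {a : ℝ} (ha : 0 ≤ a) (h : ∀ x ∉ s, ‖f x‖ ≤ a) : ‖f‖ ≤ a + ‖restrictL u f‖ := by
  refine (ContinuousMap.norm_le _ (by positivity)).2 fun x => ?_
  by_cases hx : x ∈ s
  · exact ((restrictL u f).norm_coe_le_norm ⟨x, hsu hx⟩).trans (le_add_of_nonneg_left ha)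
  · exact (h x hx).trans (le_add_of_nonneg_right (norm_nonneg _))

end ContinuousMap

theorem exists_norm_apply_le_of_notMem_interior {X 𝕜 : Type*} [TopologicalSpace X]
    [CompactSpace X] [T2Space X] [NormedField 𝕜] {φ : X → X} (hφ : Continuous φ)
    (hinj : Function.Injective φ) (w : C(X, 𝕜)) {c : 𝕜} {t : ℝ} {m : ℕ} (ht : 0 < t)
    (htc : t < ‖c‖) (hm : 0 < m)
    (hN : ∀ x ∈ (⋂ n, Set.range φ^[n]) \ interior (⋂ n, Set.range φ^[n]),
      ‖weightProd w φ m x‖ < t ^ m) :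
    ∃ C, 0 ≤ C ∧ ∀ f g : C(X, 𝕜), (∀ y, g y = c * f y - w y * f (φ y)) →
      ∀ x ∉ interior (⋂ n, Set.range φ^[n]), ‖f x‖ ≤ C * ‖g‖ := by
  set L := ⋂ n, Set.range φ^[n]
  set V := {x | ‖weightProd w φ m x‖ < t ^ m}
  have hV : IsOpen V := isOpen_lt (w.continuous.weightProd hφ m).norm continuous_const
  have hLV : L ⊆ V ∪ interior L := fun x hx =>
    (em (x ∈ interior L)).elim Or.inr fun h => Or.inl (hN x ⟨hx, h⟩)
  obtain ⟨p, hp⟩ := exists_iterate_mem_of_iInter_range_subset hφ (hV.union isOpen_interior) hLV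
  have horbit : ∀ x ∉ interior L, ∀ n, p ≤ n → ‖weightProd w φ m (φ^[n] x)‖ ≤ t ^ m := by
    intro x hx n hn
    obtain ⟨k, rfl⟩ := Nat.exists_eq_add_of_le hn
    have hpk := hp (φ^[k] x)
    rw [← Function.iterate_add_apply] at hpk
    rcases hpk with h | h
    · exact h.le
    · exact absurd h ((mapsTo_compl_interior_iInter_range hφ hinj).iterate _ hx)
  set A := max ‖w‖ t
  refine ⟨(A / t) ^ (p + m) / (‖c‖ - t), div_nonneg (by positivity) (sub_nonneg.2 htc.le),
    fun f g hg x hx => ?_⟩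
  rw [div_mul_eq_mul_div]
  exact norm_le_of_norm_weightProd_le ht.le htc hg f.norm_coe_le_norm g.norm_coe_le_norm
    (norm_weightProd_le_of_forall_le (fun y => (w.norm_coe_le_norm y).trans (le_max_left _ _))
      ht (le_max_right _ _) hm (horbit x hx))

theorem stmt12_general (K : Type*) [TopologicalSpace K] [CompactSpace K] [T2Space K]
    (φ : K → K) (hφc : Continuous φ) (hφi : Function.Injective φ)
    (w : C(K, ℂ)) (T : C(K, ℂ) →L[ℂ] C(K, ℂ))
    (hT : ∀ (f : C(K, ℂ)) (k : K), T f k = w k * f (φ k))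
    (L N : Set K) [CompactSpace L] [CompactSpace N]
    (hL : L = ⋂ n : ℕ, φ^[n] '' Set.univ)
    (hN : N = L \ interior L)
    (hφL : ∀ k ∈ L, φ k ∈ L) (hφN : ∀ k ∈ N, φ k ∈ N)
    (TL : C(L, ℂ) →L[ℂ] C(L, ℂ))
    (hTL : ∀ (f : C(L, ℂ)) (k : L), TL f k = w k.1 * f ⟨φ k.1, hφL k.1 k.2⟩)
    (TN : C(N, ℂ) →L[ℂ] C(N, ℂ))
    (hTN : ∀ (f : C(N, ℂ)) (k : N), TN f k = w k.1 * f ⟨φ k.1, hφN k.1 k.2⟩)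
    (lam : ℂ)
    (hlam : spectralRadius ℂ TN < (‖lam‖₊ : ENNReal))
    (hUSFL : IsClosed (Set.range (lam • ContinuousLinearMap.id ℂ C(L, ℂ) - TL)) ∧
        FiniteDimensional ℂ (LinearMap.ker (((lam • ContinuousLinearMap.id ℂ C(L, ℂ) - TL : C(L, ℂ) →L[ℂ] C(L, ℂ)) : C(L, ℂ) →ₗ[ℂ] C(L, ℂ))))) :
    IsClosed (Set.range (lam • ContinuousLinearMap.id ℂ C(K, ℂ) - T)) ∧
      FiniteDimensional ℂ (LinearMap.ker (((lam • ContinuousLinearMap.id ℂ C(K, ℂ) - T : C(K, ℂ) →L[ℂ] C(K, ℂ)) : C(K, ℂ) →ₗ[ℂ] C(K, ℂ)))) := by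
  simp only [Set.image_univ] at hL
  subst hL hN
  obtain ⟨t, hρt, htlam⟩ := ENNReal.lt_iff_exists_nnreal_btwn.1 hlam
  have ht : (0 : ℝ) < t := by exact_mod_cast ENNReal.coe_pos.1 (zero_le.trans_lt hρt)
  have htlam' : (t : ℝ) < ‖lam‖ := by exact_mod_cast ENNReal.coe_lt_coe.1 htlam
  obtain ⟨m, hm, hTNm⟩ : ∃ m, 0 < m ∧ ‖TN ^ m‖ < (t : ℝ) ^ m :=
    exists_norm_pow_lt_of_spectralRadius_lt TN hρt
  have hwN : ∀ x ∈ (⋂ n, Set.range φ^[n]) \ interior (⋂ n, Set.range φ^[n]),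
      ‖weightProd w φ m x‖ < (t : ℝ) ^ m := fun x hx => by
    have := norm_weightProd_le_norm_pow TN (w := fun k => w k.1)
      (φ := fun k => ⟨φ k.1, hφN k.1 k.2⟩) hTN m ⟨x, hx⟩
    rw [weightProd_comp_of_semiconj (g := Subtype.val) fun _ => rfl] at this
    exact this.trans_lt hTNm
  obtain ⟨C, hC0, hC⟩ :=
    exists_norm_apply_le_of_notMem_interior hφc hφi w (c := lam) ht htlam' hm hwN
  refine ContinuousLinearMap.IsUpperSemiFredholm.of_comp_eq hUSFL (ContinuousMap.restrictL _)
    (ContinuousMap.restrictL _) ?_ ⟨C, hC0⟩ fun f => ?_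
  · ext f x
    simp [hT, hTL]
  · exact ContinuousMap.norm_le_add_norm_restrictL interior_subset f (by positivity)
      (hC f _ fun y => by simp [hT])

/-- if `|λ| > ρ(T, C(N))` and `λ ∉ σ₂(T, C(L))`, then `λ ∉ σ₂(T)`. -/
theorem stmt12 (K : Type*) [TopologicalSpace K] [CompactSpace K] [T2Space K]
    (φ : K → K) (hφc : Continuous φ) (hφi : Function.Injective φ)
    (hns : Set.range φ ≠ Set.univ)
    (w : C(K, ℂ)) (T : C(K, ℂ) →L[ℂ] C(K, ℂ))
    (hT : ∀ (f : C(K, ℂ)) (k : K), T f k = w k * f (φ k))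
    (L N : Set K) [CompactSpace L] [CompactSpace N]
    (hL : L = ⋂ n : ℕ, φ^[n] '' Set.univ)
    (hN : N = L \ interior L)
    (hφL : ∀ k ∈ L, φ k ∈ L) (hφN : ∀ k ∈ N, φ k ∈ N)
    (TL : C(L, ℂ) →L[ℂ] C(L, ℂ))
    (hTL : ∀ (f : C(L, ℂ)) (k : L), TL f k = w k.1 * f ⟨φ k.1, hφL k.1 k.2⟩)
    (TN : C(N, ℂ) →L[ℂ] C(N, ℂ))
    (hTN : ∀ (f : C(N, ℂ)) (k : N), TN f k = w k.1 * f ⟨φ k.1, hφN k.1 k.2⟩)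
    (lam : ℂ)
    (hlam : spectralRadius ℂ TN < (‖lam‖₊ : ENNReal))
    (hUSFL : IsClosed (Set.range (lam • ContinuousLinearMap.id ℂ C(L, ℂ) - TL)) ∧
        FiniteDimensional ℂ (LinearMap.ker (((lam • ContinuousLinearMap.id ℂ C(L, ℂ) - TL : C(L, ℂ) →L[ℂ] C(L, ℂ)) : C(L, ℂ) →ₗ[ℂ] C(L, ℂ))))) :
    IsClosed (Set.range (lam • ContinuousLinearMap.id ℂ C(K, ℂ) - T)) ∧
      FiniteDimensional ℂ (LinearMap.ker (((lam • ContinuousLinearMap.id ℂ C(K, ℂ) - T : C(K, ℂ) →L[ℂ] C(K, ℂ)) : C(K, ℂ) →ₗ[ℂ] C(K, ℂ)))) :=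
  stmt12_general K φ hφc hφi w T hT L N hL hN hφL hφN TL hTL TN hTN lam hlam hUSFL
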